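/- For p ∈ [1,∞) and u ∈ L^p(ℝ^N), defining E_t = {(x,y) ∈ ℝ^{2N} : x ≠ y, |u(x)-u(y)|^p ≥ t^p·|x-y|^N}, one has lim_{t→0⁺} t^p·|E_t|_{2N} = 2ω_N·∫_{ℝ^N} |u(x)|^p dx. -/

import Mathlib

/-!
Write `s = t ^ p` and slice `E_s` at `x`, keeping only the `y` with `|u y| ≤ |u x|` (or
`|u y| < |u x|`). For `r` slightly below `|u x|` the slice contains the ball
`{y | s |x - y|^N ≤ r^p}` up to the set `{|u y| > |u x| - r}`, and for `r` slightly above `|u x|`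
it lies in that ball up to `{|u y| > r - |u x|}`; both exceptional sets have finite measure by
Markov's inequality. As `s · |{y | s |x - y|^N ≤ c}| = ω_N c`, `s` times the measure of the
slice tends to `ω_N |u x|^p`, and dominated convergence (with bound `ω_N (2 |u x|)^p`)
integrates this to `ω_N ∫ |u|^p`. Since `E_s` is symmetric, it is covered by the half where
`|u y| ≤ |u x|` and its mirror image, and contains the disjoint union of the half where
`|u y| < |u x|` and its mirror image; this gives the factor `2`.
-/

open MeasureTheory Metric Set Filter Module
open scoped ENNReal Topology

theorem Real.tendsto_rpow_const_nhdsGT_zero {p : ℝ} (hp : 0 < p) :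
    Tendsto (fun t : ℝ => t ^ p) (𝓝[>] 0) (𝓝[>] 0) := by
  have h := ((Real.continuous_rpow_const hp.le).continuousWithinAt (s := Ioi 0)
    (x := 0)).tendsto_nhdsWithin fun t (ht : 0 < t) => Real.rpow_pos_of_pos ht p
  rwa [Real.zero_rpow hp.ne'] at h

theorem ENNReal.tendsto_ofReal_mul_nhdsGT_zero {K : ℝ≥0∞} (hK : K ≠ ⊤) :
    Tendsto (fun s : ℝ => ENNReal.ofReal s * K) (𝓝[>] 0) (𝓝 0) := by
  have h := (ENNReal.continuous_ofReal.tendsto' 0 0 ENNReal.ofReal_zero).mono_left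
    (nhdsWithin_le_nhds (s := Ioi 0))
  simpa using ENNReal.Tendsto.mul_const h (Or.inr hK)

theorem MeasureTheory.measure_lt_abs_lt_top_of_lintegral_rpow {α : Type*} [MeasurableSpace α]
    {μ : Measure α} {p : ℝ} (hp : 0 < p) {u : α → ℝ} (hu : Measurable u)
    (hfin : ∫⁻ x, ENNReal.ofReal (|u x| ^ p) ∂μ < ⊤) {c : ℝ} (hc : 0 < c) :
    μ {y | c < |u y|} < ⊤ := by
  have hsub : {y | c < |u y|} ⊆ {y | ENNReal.ofReal (c ^ p) ≤ ENNReal.ofReal (|u y| ^ p)} :=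
    fun y hy => ENNReal.ofReal_le_ofReal (Real.rpow_le_rpow hc.le (le_of_lt hy) hp.le)
  have hcp : ENNReal.ofReal (c ^ p) ≠ 0 := (ENNReal.ofReal_pos.2 (Real.rpow_pos_of_pos hc p)).ne'
  exact (measure_mono hsub).trans_lt <|
    (meas_ge_le_lintegral_div (hu.abs.pow_const p).ennreal_ofReal.aemeasurable hcp
      ENNReal.ofReal_ne_top).trans_lt (ENNReal.div_lt_top hfin.ne hcp)

section Swap

variable {α : Type*} [MeasurableSpace α] {μ : Measure α} [SFinite μ]

theorem MeasureTheory.Measure.prod_self_preimage_swap (T : Set (α × α)) :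
    μ.prod μ (Prod.swap ⁻¹' T) = μ.prod μ T :=
  (Measure.measurePreserving_swap (μ := μ) (ν := μ)).measure_preimage_equiv
    (f := MeasurableEquiv.prodComm) T

variable {S : Set (α × α)}

theorem MeasureTheory.Measure.two_mul_prod_inter_lt_le (hS : Prod.swap ⁻¹' S = S)
    (hSm : MeasurableSet S) {f : α → ℝ} (hf : Measurable f) :
    2 * μ.prod μ (S ∩ {q | f q.2 < f q.1}) ≤ μ.prod μ S := by
  set T := S ∩ {q | f q.2 < f q.1}
  have hT : MeasurableSet T :=
    hSm.inter (measurableSet_lt (hf.comp measurable_snd) (hf.comp measurable_fst))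
  have hdisj : Disjoint T (Prod.swap ⁻¹' T) :=
    disjoint_left.2 fun q h h' => h.2.not_gt (show f q.1 < f q.2 from h'.2)
  calc 2 * μ.prod μ T = μ.prod μ T + μ.prod μ (Prod.swap ⁻¹' T) := by
        rw [Measure.prod_self_preimage_swap, two_mul]
    _ = μ.prod μ (T ∪ Prod.swap ⁻¹' T) :=
        (measure_union hdisj (hT.preimage measurable_swap)).symm
    _ ≤ μ.prod μ S := measure_mono <|
        union_subset inter_subset_left (hS ▸ preimage_mono inter_subset_left)

theorem MeasureTheory.Measure.prod_le_two_mul_prod_inter_le (hS : Prod.swap ⁻¹' S = S)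
    (f : α → ℝ) :
    μ.prod μ S ≤ 2 * μ.prod μ (S ∩ {q | f q.2 ≤ f q.1}) := by
  set T := S ∩ {q | f q.2 ≤ f q.1}
  have hcover : S ⊆ T ∪ Prod.swap ⁻¹' T := by
    intro q hq
    rcases le_total (f q.2) (f q.1) with h | h
    · exact Or.inl ⟨hq, h⟩
    · exact Or.inr ⟨hS.symm ▸ hq, h⟩
  calc μ.prod μ S ≤ μ.prod μ T + μ.prod μ (Prod.swap ⁻¹' T) :=
        (measure_mono hcover).trans (measure_union_le _ _)
    _ = 2 * μ.prod μ T := by rw [Measure.prod_self_preimage_swap, two_mul]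

end Swap

section JumpSet

variable {E : Type*} [NormedAddCommGroup E] [NormedSpace ℝ E]

/-- The set `E_t` of the statement, with `s = t ^ p`. -/
def jumpSet (u : E → ℝ) (p s : ℝ) : Set (E × E) :=
  {q | q.1 ≠ q.2 ∧ s * dist q.1 q.2 ^ finrank ℝ E ≤ |u q.1 - u q.2| ^ p}

variable {u : E → ℝ} {p s r : ℝ} {x y : E}

theorem preimage_swap_jumpSet : Prod.swap ⁻¹' jumpSet u p s = jumpSet u p s := by
  ext q
  simp only [jumpSet, mem_preimage, mem_ofPred_eq, Prod.fst_swap, Prod.snd_swap, ne_comm,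
    dist_comm q.2, abs_sub_comm (u q.2)]

theorem mem_jumpSet_of_add_le (hp : 0 ≤ p) (hr : 0 < r)
    (hxy : s * dist x y ^ finrank ℝ E ≤ r ^ p) (hy : r + |u y| ≤ |u x|) :
    (x, y) ∈ jumpSet u p s := by
  refine ⟨fun h => ?_, hxy.trans (Real.rpow_le_rpow hr.le ?_ hp)⟩
  · obtain rfl : x = y := h
    linarith
  · linarith [abs_sub_abs_le_abs_sub (u x) (u y)]

theorem mul_dist_pow_le_of_mem_jumpSet (hp : 0 ≤ p) (hxy : (x, y) ∈ jumpSet u p s)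
    (hy : |u x| + |u y| ≤ r) : s * dist x y ^ finrank ℝ E ≤ r ^ p :=
  hxy.2.trans (Real.rpow_le_rpow (abs_nonneg _) ((abs_sub _ _).trans hy) hp)

variable [FiniteDimensional ℝ E] [MeasurableSpace E] [BorelSpace E] (μ : Measure E)
  [μ.IsAddHaarMeasure]

theorem measurableSet_jumpSet (hu : Measurable u) : MeasurableSet (jumpSet u p s) := by
  have hdist : Measurable fun q : E × E => s * dist q.1 q.2 ^ finrank ℝ E := by fun_prop
  have hdiff : Measurable fun q : E × E => |u q.1 - u q.2| ^ p := by fun_prop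
  exact measurableSet_diagonal.compl.inter (measurableSet_le hdist hdiff)

variable [Nontrivial E]

theorem MeasureTheory.Measure.ofReal_mul_addHaar_setOf_mul_dist_pow_le (x : E)
    {c : ℝ} (hs : 0 < s) (hc : 0 ≤ c) :
    ENNReal.ofReal s * μ {y | s * dist x y ^ finrank ℝ E ≤ c} =
      ENNReal.ofReal c * μ (ball 0 1) := by
  set N := finrank ℝ E
  have hN : N ≠ 0 := finrank_pos.ne'
  have hcs : 0 ≤ c / s := div_nonneg hc hs.le
  set r := (c / s) ^ (N : ℝ)⁻¹
  have hr : 0 ≤ r := Real.rpow_nonneg hcs _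
  have hrN : r ^ N = c / s := by
    rw [← Real.rpow_natCast, ← Real.rpow_mul hcs, inv_mul_cancel₀ (Nat.cast_ne_zero.2 hN),
      Real.rpow_one]
  have hball : {y | s * dist x y ^ N ≤ c} = closedBall x r := by
    ext y
    rw [mem_ofPred_eq, mem_closedBall, dist_comm y x, ← le_div_iff₀' hs, ← hrN,
      pow_le_pow_iff_left₀ dist_nonneg hr hN]
  rw [hball, Measure.addHaar_closedBall μ x hr, hrN, ← mul_assoc, ← ENNReal.ofReal_mul hs.le,
    mul_div_cancel₀ c hs.ne']

variable {B : Set (E × E)}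

theorem ofReal_rpow_mul_le_measure_preimage_mk_jumpSet_add (hB : {q | |u q.2| < |u q.1|} ⊆ B)
    (hp : 0 ≤ p) (hs : 0 < s) (hr : 0 < r) (x : E) :
    ENNReal.ofReal (r ^ p) * μ (ball 0 1) ≤
      ENNReal.ofReal s * μ (Prod.mk x ⁻¹' (jumpSet u p s ∩ B)) +
        ENNReal.ofReal s * μ {y | |u x| - r < |u y|} := by
  have hcover : {y | s * dist x y ^ finrank ℝ E ≤ r ^ p} ⊆
      Prod.mk x ⁻¹' (jumpSet u p s ∩ B) ∪ {y | |u x| - r < |u y|} := by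
    intro y hxy
    by_cases hy : r + |u y| ≤ |u x|
    · exact Or.inl ⟨mem_jumpSet_of_add_le hp hr hxy hy, hB (show |u y| < |u x| by linarith)⟩
    · exact Or.inr (show |u x| - r < |u y| by linarith)
  rw [← Measure.ofReal_mul_addHaar_setOf_mul_dist_pow_le μ x hs (by positivity), ← mul_add]
  gcongr
  exact (measure_mono hcover).trans (measure_union_le _ _)

theorem measure_preimage_mk_jumpSet_le_ofReal_rpow_mul_add (hp : 0 ≤ p) (hs : 0 < s)
    (hr : 0 ≤ r) (x : E) :
    ENNReal.ofReal s * μ (Prod.mk x ⁻¹' (jumpSet u p s ∩ B)) ≤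
      ENNReal.ofReal (r ^ p) * μ (ball 0 1) + ENNReal.ofReal s * μ {y | r - |u x| < |u y|} := by
  have hcover : Prod.mk x ⁻¹' (jumpSet u p s ∩ B) ⊆
      {y | s * dist x y ^ finrank ℝ E ≤ r ^ p} ∪ {y | r - |u x| < |u y|} := by
    rintro y ⟨hxy, -⟩
    by_cases hy : |u x| + |u y| ≤ r
    · exact Or.inl (mul_dist_pow_le_of_mem_jumpSet hp hxy hy)
    · exact Or.inr (show r - |u x| < |u y| by linarith)
  rw [← Measure.ofReal_mul_addHaar_setOf_mul_dist_pow_le μ x hs (by positivity), ← mul_add]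
  gcongr
  exact (measure_mono hcover).trans (measure_union_le _ _)

theorem measure_preimage_mk_jumpSet_le_ofReal_two_mul_rpow_mul
    (hB : B ⊆ {q | |u q.2| ≤ |u q.1|}) (hp : 0 ≤ p) (hs : 0 < s) (x : E) :
    ENNReal.ofReal s * μ (Prod.mk x ⁻¹' (jumpSet u p s ∩ B)) ≤
      ENNReal.ofReal ((2 * |u x|) ^ p) * μ (ball 0 1) := by
  have hsub : Prod.mk x ⁻¹' (jumpSet u p s ∩ B) ⊆
      {y | s * dist x y ^ finrank ℝ E ≤ (2 * |u x|) ^ p} := by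
    rintro y ⟨hxy, hy⟩
    exact mul_dist_pow_le_of_mem_jumpSet hp hxy (by linarith [show |u y| ≤ |u x| from hB hy])
  rw [← Measure.ofReal_mul_addHaar_setOf_mul_dist_pow_le μ x hs (by positivity)]
  gcongr

theorem ofReal_rpow_mul_le_liminf_measure_preimage_mk_jumpSet (hp : 0 < p) (hu : Measurable u)
    (hfin : ∫⁻ x, ENNReal.ofReal (|u x| ^ p) ∂μ < ⊤)
    (hB : {q | |u q.2| < |u q.1|} ⊆ B) (hr : 0 < r) (hrx : r < |u x|) :
    ENNReal.ofReal (r ^ p) * μ (ball 0 1) ≤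
      liminf (fun s => ENNReal.ofReal s * μ (Prod.mk x ⁻¹' (jumpSet u p s ∩ B)))
        (𝓝[>] 0) := by
  have hK := measure_lt_abs_lt_top_of_lintegral_rpow hp hu hfin (sub_pos.2 hrx)
  calc ENNReal.ofReal (r ^ p) * μ (ball 0 1)
      ≤ liminf ((fun s => ENNReal.ofReal s * μ (Prod.mk x ⁻¹' (jumpSet u p s ∩ B))) +
          fun s => ENNReal.ofReal s * μ {y | |u x| - r < |u y|}) (𝓝[>] 0) := by
        refine le_liminf_of_le (by isBoundedDefault) ?_
        filter_upwards [self_mem_nhdsWithin] with s hs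
        exact ofReal_rpow_mul_le_measure_preimage_mk_jumpSet_add μ hB hp.le hs hr x
    _ = _ := ENNReal.liminf_add_of_right_tendsto_zero
        (ENNReal.tendsto_ofReal_mul_nhdsGT_zero hK.ne) _

theorem limsup_measure_preimage_mk_jumpSet_le_ofReal_rpow_mul (hp : 0 < p) (hu : Measurable u)
    (hfin : ∫⁻ x, ENNReal.ofReal (|u x| ^ p) ∂μ < ⊤) (hrx : |u x| < r) :
    limsup (fun s => ENNReal.ofReal s * μ (Prod.mk x ⁻¹' (jumpSet u p s ∩ B))) (𝓝[>] 0) ≤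
      ENNReal.ofReal (r ^ p) * μ (ball 0 1) := by
  have hK := measure_lt_abs_lt_top_of_lintegral_rpow hp hu hfin (sub_pos.2 hrx)
  calc limsup (fun s => ENNReal.ofReal s * μ (Prod.mk x ⁻¹' (jumpSet u p s ∩ B))) (𝓝[>] 0)
      ≤ limsup ((fun _ => ENNReal.ofReal (r ^ p) * μ (ball 0 1)) +
          fun s => ENNReal.ofReal s * μ {y | r - |u x| < |u y|}) (𝓝[>] 0) := by
        refine limsup_le_limsup ?_
        filter_upwards [self_mem_nhdsWithin] with s hs
        exact measure_preimage_mk_jumpSet_le_ofReal_rpow_mul_add μ hp.le hs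
          ((abs_nonneg _).trans hrx.le) x
    _ = _ := by
        rw [ENNReal.limsup_add_of_right_tendsto_zero
          (ENNReal.tendsto_ofReal_mul_nhdsGT_zero hK.ne), limsup_const]

theorem tendsto_ofReal_mul_measure_preimage_mk_jumpSet_inter (hp : 0 < p) (hu : Measurable u)
    (hfin : ∫⁻ x, ENNReal.ofReal (|u x| ^ p) ∂μ < ⊤)
    (hB : {q | |u q.2| < |u q.1|} ⊆ B) (x : E) :
    Tendsto (fun s => ENNReal.ofReal s * μ (Prod.mk x ⁻¹' (jumpSet u p s ∩ B))) (𝓝[>] 0)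
      (𝓝 (ENNReal.ofReal (|u x| ^ p) * μ (ball 0 1))) := by
  have hcont : Continuous fun r : ℝ => ENNReal.ofReal (r ^ p) * μ (ball 0 1) :=
    (ENNReal.continuous_mul_const measure_ball_lt_top.ne).comp
      (ENNReal.continuous_ofReal.comp (Real.continuous_rpow_const hp.le))
  refine tendsto_of_le_liminf_of_limsup_le ?_ ?_
  · rcases (abs_nonneg (u x)).eq_or_lt with hx | hx
    · rw [← hx, Real.zero_rpow hp.ne', ENNReal.ofReal_zero, zero_mul]
      exact zero_le
    · refine le_of_tendsto ((hcont.tendsto _).mono_left nhdsWithin_le_nhds :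
        Tendsto _ (𝓝[<] |u x|) _) ?_
      filter_upwards [Ioo_mem_nhdsLT hx] with r hr
      exact ofReal_rpow_mul_le_liminf_measure_preimage_mk_jumpSet μ hp hu hfin hB hr.1 hr.2
  · refine ge_of_tendsto ((hcont.tendsto _).mono_left nhdsWithin_le_nhds :
      Tendsto _ (𝓝[>] |u x|) _) ?_
    filter_upwards [self_mem_nhdsWithin] with r hr
    exact limsup_measure_preimage_mk_jumpSet_le_ofReal_rpow_mul μ hp hu hfin hr

theorem tendsto_ofReal_mul_prod_jumpSet_inter (hp : 0 < p) (hu : Measurable u)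
    (hfin : ∫⁻ x, ENNReal.ofReal (|u x| ^ p) ∂μ < ⊤)
    (hB : {q | |u q.2| < |u q.1|} ⊆ B) (hB' : B ⊆ {q | |u q.2| ≤ |u q.1|})
    (hBm : MeasurableSet B) :
    Tendsto (fun s => ENNReal.ofReal s * μ.prod μ (jumpSet u p s ∩ B)) (𝓝[>] 0)
      (𝓝 (μ (ball 0 1) * ∫⁻ x, ENNReal.ofReal (|u x| ^ p) ∂μ)) := by
  have hm : ∀ s, MeasurableSet (jumpSet u p s ∩ B) :=
    fun s => (measurableSet_jumpSet hu).inter hBm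
  have hsec : ∀ s, Measurable fun x => μ (Prod.mk x ⁻¹' (jumpSet u p s ∩ B)) :=
    fun s => measurable_measure_prodMk_left (hm s)
  have hw : Measurable fun x => ENNReal.ofReal (|u x| ^ p) := (hu.abs.pow_const p).ennreal_ofReal
  have hprod : ∀ s, ENNReal.ofReal s * μ.prod μ (jumpSet u p s ∩ B) =
      ∫⁻ x, ENNReal.ofReal s * μ (Prod.mk x ⁻¹' (jumpSet u p s ∩ B)) ∂μ := fun s => by
    rw [Measure.prod_apply (hm s), lintegral_const_mul _ (hsec s)]
  simp_rw [hprod]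
  rw [mul_comm, ← lintegral_mul_const _ hw]
  refine tendsto_lintegral_filter_of_dominated_convergence
    (fun x => ENNReal.ofReal (2 ^ p) * (ENNReal.ofReal (|u x| ^ p) * μ (ball 0 1)))
    (.of_forall fun s => (hsec s).const_mul _) ?_ ?_
    (.of_forall (tendsto_ofReal_mul_measure_preimage_mk_jumpSet_inter μ hp hu hfin hB))
  · filter_upwards [self_mem_nhdsWithin] with s hs
    refine .of_forall fun x => ?_
    rw [← mul_assoc, ← ENNReal.ofReal_mul (by positivity),
      ← Real.mul_rpow zero_le_two (abs_nonneg _)]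
    exact measure_preimage_mk_jumpSet_le_ofReal_two_mul_rpow_mul μ hB' hp.le hs x
  · rw [lintegral_const_mul _ (hw.mul_const _), lintegral_mul_const _ hw]
    exact ENNReal.mul_ne_top ENNReal.ofReal_ne_top
      (ENNReal.mul_ne_top hfin.ne measure_ball_lt_top.ne)

theorem tendsto_ofReal_mul_prod_jumpSet (hp : 0 < p) (hu : Measurable u)
    (hfin : ∫⁻ x, ENNReal.ofReal (|u x| ^ p) ∂μ < ⊤) :
    Tendsto (fun s => ENNReal.ofReal s * μ.prod μ (jumpSet u p s)) (𝓝[>] 0)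
      (𝓝 (2 * μ (ball 0 1) * ∫⁻ x, ENNReal.ofReal (|u x| ^ p) ∂μ)) := by
  have hv : Measurable fun x => |u x| := hu.abs
  have hlt := tendsto_ofReal_mul_prod_jumpSet_inter μ hp hu hfin subset_rfl
    (fun q (h : |u q.2| < |u q.1|) => h.le)
    (measurableSet_lt (hv.comp measurable_snd) (hv.comp measurable_fst))
  have hle := tendsto_ofReal_mul_prod_jumpSet_inter μ hp hu hfin
    (fun q (h : |u q.2| < |u q.1|) => h.le) subset_rfl
    (measurableSet_le (hv.comp measurable_snd) (hv.comp measurable_fst))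
  rw [mul_assoc]
  refine tendsto_of_tendsto_of_tendsto_of_le_of_le
    (ENNReal.Tendsto.const_mul hlt (Or.inr ENNReal.ofNat_ne_top))
    (ENNReal.Tendsto.const_mul hle (Or.inr ENNReal.ofNat_ne_top)) (fun s => ?_) (fun s => ?_)
  · rw [mul_left_comm]
    gcongr
    exact Measure.two_mul_prod_inter_lt_le preimage_swap_jumpSet (measurableSet_jumpSet hu) hv
  · rw [mul_left_comm]
    gcongr
    exact Measure.prod_le_two_mul_prod_inter_le preimage_swap_jumpSet fun x => |u x|

end JumpSet

theorem stmt16 (N : ℕ) (hN : 0 < N) (p : ℝ) (hp : 1 ≤ p)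
    (u : EuclideanSpace ℝ (Fin N) → ℝ) (hu : Measurable u)
    (hfin : ∫⁻ x, ENNReal.ofReal (|u x| ^ p) < ⊤) :
    Tendsto (fun t : ℝ => ENNReal.ofReal (t ^ p) *
      volume {q : EuclideanSpace ℝ (Fin N) × EuclideanSpace ℝ (Fin N) |
        q.1 ≠ q.2 ∧ t ^ p * dist q.1 q.2 ^ N ≤ |u q.1 - u q.2| ^ p})
      (nhdsWithin 0 (Ioi 0))
      (nhds (2 * volume (ball (0 : EuclideanSpace ℝ (Fin N)) 1) *
        ∫⁻ x, ENNReal.ofReal (|u x| ^ p))) := by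
  have hp₀ : 0 < p := zero_lt_one.trans_le hp
  have : Nontrivial (EuclideanSpace ℝ (Fin N)) :=
    finrank_pos_iff.1 (by rwa [finrank_euclideanSpace_fin])
  have h := (tendsto_ofReal_mul_prod_jumpSet volume hp₀ hu hfin).comp
    (Real.tendsto_rpow_const_nhdsGT_zero hp₀)
  simpa only [Function.comp_def, jumpSet, finrank_euclideanSpace_fin,
    ← Measure.volume_eq_prod] using h
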